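/- arXiv:2605.07441 — 2 statements merged into one kernel-verified Lean document; each statement's English description precedes it below -/
import Mathlib

section
/- Let Z_1, ..., Z_{N+1} be exchangeable real-valued random variables and let κ = ⌈(1-ε)(N+1)⌉ for ε ∈ (0,1). Then P(Z_{N+1} ≤ Z_{(κ)}) ≥ κ/(N+1) ≥ 1-ε, where Z_{(κ)} denotes the κ-th order statistic of Z_1, ..., Z_N. -/
/-!
Call `j` *good* for a vector `g` if fewer than `κ` coordinates of `g` lie strictly below `g j`.
The `κ` indices holding the `κ` smallest sorted values are good, so at least `κ` of the `N + 1`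
indices are good at every `ω`. By exchangeability each index is good with the same probability,
hence the last one is good with probability at least `κ / (N + 1)`; and the last index is good
exactly when `Z_{N+1}` is at most the `κ`-th order statistic of `Z_1, …, Z_N`.
-/

open MeasureTheory ProbabilityTheory

/-- The κ-th smallest value (1-indexed by `i : Fin n`) of a finite tuple. -/
noncomputable def orderStat {n : ℕ} (f : Fin n → ℝ) (i : Fin n) : ℝ :=
  f (Tuple.sort f i)

open Finset
open scoped ENNReal

theorem Finset.card_filter_comp_equiv {ι κ : Type*} [Fintype ι] [Fintype κ] (e : ι ≃ κ)
    (p : κ → Prop) [DecidablePred p] : #{i | p (e i)} = #{k | p k} := by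
  simp only [card_filter]
  exact e.sum_comp (fun k => if p k then 1 else 0)

theorem Fin.card_filter_univ_castSucc {n : ℕ} (p : Fin (n + 1) → Prop) [DecidablePred p] :
    #{x | p x} = #{x : Fin n | p x.castSucc} + if p (Fin.last n) then 1 else 0 := by
  simp only [card_filter, Fin.sum_univ_castSucc]

theorem le_orderStat_iff {n : ℕ} (f : Fin n → ℝ) (k : Fin n) (t : ℝ) :
    t ≤ orderStat f k ↔ #{i | f i < t} ≤ k := by
  have := Tuple.lt_card_lt_iff_apply_lt_of_monotone (j := k) (a := t) (Tuple.monotone_sort f)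
  rw [Function.comp_def, Finset.card_filter_comp_equiv (Tuple.sort f) (f · < t)] at this
  rw [← not_lt, ← not_lt, orderStat]
  exact not_congr this.symm

theorem card_lt_orderStat_le {n : ℕ} (f : Fin n → ℝ) (k : Fin n) :
    #{i | f i < orderStat f k} ≤ k :=
  (le_orderStat_iff f k _).1 le_rfl

theorem le_card_filter_card_lt_lt {n : ℕ} (f : Fin n → ℝ) {κ : ℕ} (hκ : κ ≤ n) :
    κ ≤ #{j | #{i | f i < f j} < κ} := by
  simpa using card_le_card_of_injOn (s := univ) (t := {j | #{i | f i < f j} < κ})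
    (fun r : Fin κ => Tuple.sort f (Fin.castLE hκ r))
    (fun r _ => mem_filter.2 ⟨mem_univ _, (card_lt_orderStat_le f _).trans_lt r.isLt⟩)
    (fun r _ s _ h => Fin.castLE_injective hκ ((Tuple.sort f).injective h))

theorem measurableSet_card_lt_lt {ι : Type*} [Fintype ι] (j : ι) (κ : ℕ) :
    MeasurableSet {g : ι → ℝ | #{i | g i < g j} < κ} := by
  have : Measurable fun g : ι → ℝ => #{i | g i < g j} := by
    simp only [card_filter]
    exact Finset.measurable_sum _ fun i _ =>
      Measurable.ite (measurableSet_lt (measurable_pi_apply i) (measurable_pi_apply j))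
        measurable_const measurable_const
  exact this measurableSet_Iio

section Exchangeable

variable {Ω ι : Type*} [MeasurableSpace Ω] {P : Measure Ω}

theorem natCast_mul_measure_univ_le_sum [Fintype ι] (μ : Measure Ω) {A : ι → Set Ω}
    [∀ i, DecidablePred (· ∈ A i)] (hA : ∀ i, MeasurableSet (A i)) {k : ℕ}
    (hk : ∀ ω, k ≤ #{i | ω ∈ A i}) :
    k * μ Set.univ ≤ ∑ i, μ (A i) :=
  calc k * μ Set.univ = ∫⁻ _, (k : ℝ≥0∞) ∂μ := (lintegral_const _).symm
    _ ≤ ∫⁻ ω, ∑ i, (A i).indicator 1 ω ∂μ := lintegral_mono fun ω => by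
      simp only [Set.indicator_apply, Pi.one_apply, sum_boole]
      exact_mod_cast hk ω
    _ = ∑ i, μ (A i) := by
      rw [lintegral_finsetSum _ fun i _ => measurable_one.indicator (hA i)]
      simp only [lintegral_indicator_one (hA _)]

theorem measure_preimage_comp_perm_eq {β : Type*} [MeasurableSpace β] {Z : ι → Ω → β}
    (hZ : ∀ i, Measurable (Z i)) {σ : Equiv.Perm ι}
    (hσ : Measure.map (fun ω i => Z (σ i) ω) P = Measure.map (fun ω i => Z i ω) P)
    {S : Set (ι → β)} (hS : MeasurableSet S) :
    P ((fun ω i => Z (σ i) ω) ⁻¹' S) = P ((fun ω i => Z i ω) ⁻¹' S) := by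
  rw [← Measure.map_apply (measurable_pi_lambda _ fun i => hZ (σ i)) hS, hσ,
    Measure.map_apply (measurable_pi_lambda _ hZ) hS]

theorem measure_card_lt_lt_eq [Fintype ι] [DecidableEq ι] {Z : ι → Ω → ℝ}
    (hZ : ∀ i, Measurable (Z i))
    (hexch : ∀ σ : Equiv.Perm ι,
      Measure.map (fun ω i => Z (σ i) ω) P = Measure.map (fun ω i => Z i ω) P)
    (j l : ι) (κ : ℕ) :
    P {ω | #{i | Z i ω < Z j ω} < κ} = P {ω | #{i | Z i ω < Z l ω} < κ} := by
  have hswap : {ω | #{i | Z i ω < Z j ω} < κ} =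
      (fun ω i => Z (Equiv.swap l j i) ω) ⁻¹' {g | #{i | g i < g l} < κ} := by
    ext ω
    simp only [Set.mem_preimage, Set.mem_ofPred_eq, Equiv.swap_apply_left,
      card_filter_comp_equiv (Equiv.swap l j) (Z · ω < Z j ω)]
  rw [hswap, measure_preimage_comp_perm_eq hZ (hexch _) (measurableSet_card_lt_lt l κ)]
  rfl

theorem natCast_div_le_measure_card_lt_lt [IsProbabilityMeasure P] {n : ℕ}
    {Z : Fin n → Ω → ℝ}
    (hZ : ∀ i, Measurable (Z i))
    (hexch : ∀ σ : Equiv.Perm (Fin n),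
      Measure.map (fun ω i => Z (σ i) ω) P = Measure.map (fun ω i => Z i ω) P)
    {κ : ℕ} (hκ : κ ≤ n) (j : Fin n) :
    (κ : ℝ≥0∞) / n ≤ P {ω | #{i | Z i ω < Z j ω} < κ} := by
  have hsum : (κ : ℝ≥0∞) ≤ ∑ l, P {ω | #{i | Z i ω < Z l ω} < κ} := by
    simpa using
      natCast_mul_measure_univ_le_sum P (A := fun l => {ω | #{i | Z i ω < Z l ω} < κ})
      (fun l => measurable_pi_lambda _ hZ (measurableSet_card_lt_lt l κ))
      (fun ω => le_card_filter_card_lt_lt (fun i => Z i ω) hκ)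
  simp only [measure_card_lt_lt_eq hZ hexch _ j, sum_const, card_univ, Fintype.card_fin,
    nsmul_eq_mul] at hsum
  exact ENNReal.div_le_of_le_mul' hsum

end Exchangeable

/-- Split-conformal coverage bound: for exchangeable Z_1,…,Z_{N+1} and
κ = ⌈(1−ε)(N+1)⌉, P(Z_{N+1} ≤ Z_{(κ)}) ≥ κ/(N+1) ≥ 1−ε, where Z_{(κ)} is the
κ-th order statistic of Z_1,…,Z_N. -/
theorem exchangeable_order_stat_coverage
    {Ω : Type*} [MeasurableSpace Ω] (P : Measure Ω) [IsProbabilityMeasure P]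
    (N : ℕ) (Z : Fin (N + 1) → Ω → ℝ)
    (hmeas : ∀ i, Measurable (Z i))
    (hexch : ∀ σ : Equiv.Perm (Fin (N + 1)),
      Measure.map (fun ω i => Z (σ i) ω) P = Measure.map (fun ω i => Z i ω) P)
    (ε : ℝ)
    (κ : ℕ) (hκ : κ = ⌈(1 - ε) * (N + 1 : ℝ)⌉₊)
    (hκ1 : 1 ≤ κ) (hκN : κ ≤ N) :
    ENNReal.ofReal ((κ : ℝ) / (N + 1)) ≤
        P {ω | Z (Fin.last N) ω ≤
          orderStat (fun i : Fin N => Z i.castSucc ω) ⟨κ - 1, by omega⟩} ∧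
      (1 - ε) ≤ (κ : ℝ) / (N + 1) := by
  have hlast_good : {ω | #{i | Z i ω < Z (Fin.last N) ω} < κ} =
      {ω | Z (Fin.last N) ω ≤
        orderStat (fun i : Fin N => Z i.castSucc ω) ⟨κ - 1, by omega⟩} := by
    ext ω
    rw [Set.mem_ofPred_eq, Set.mem_ofPred_eq, le_orderStat_iff, Fin.card_filter_univ_castSucc]
    simp only [lt_irrefl, if_false, add_zero]
    omega
  refine ⟨?_, ?_⟩
  · calc ENNReal.ofReal ((κ : ℝ) / (N + 1)) = (κ : ℝ≥0∞) / (N + 1 : ℕ) := by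
          rw [ENNReal.ofReal_div_of_pos (by positivity), ENNReal.ofReal_natCast,
            ← Nat.cast_succ, ENNReal.ofReal_natCast]
      _ ≤ _ := hlast_good ▸ natCast_div_le_measure_card_lt_lt hmeas hexch (by omega) _
  · rw [le_div_iff₀ (by positivity), hκ]
    exact Nat.le_ceil _
end

section
/- Let P_k = {z : D_k z ≤ d_k}, k=1,...,K, be polytopes contained in the box ‖z‖_∞ ≤ M, and let F ⊆ ℝ^m × {0,1}^K × (ℝ^m)^K be the feasible set of the Big-M formulation (17). Then the projection of F onto the z-coordinates equals ∪_{k=1}^K P_k intersected with the box {‖z‖_∞ ≤ M}. -/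
/-!
A feasible selector `α` is binary with `∑ₖ αₖ = 1`, hence the indicator `Pi.single k 1` of one
index `k`. The big-M bounds then read `|wⱼ| ≤ 0` for `j ≠ k` and `|z - wₖ| ≤ 0`, so the lifted
point is `w = Pi.single k z`: the aggregated constraint collapses to `Dₖ z ≤ dₖ`, and
`|wₖ| ≤ M` becomes the box constraint. Conversely, every `z ∈ Pₖ` in the box lifts to
`(Pi.single k 1, Pi.single k z)`.
-/

open Matrix

theorem forall_eq_zero_or_eq_one_and_sum_eq_one_iff {ι R : Type*} [Fintype ι] [DecidableEq ι]
    [AddCommMonoidWithOne R] [CharZero R] {α : ι → R} :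
    ((∀ k, α k = 0 ∨ α k = 1) ∧ ∑ k, α k = 1) ↔ ∃ k, α = Pi.single k 1 := by
  classical
  constructor
  · rintro ⟨h01, hsum⟩
    have hα : α = fun j => if α j = 1 then 1 else 0 := by
      funext j
      rcases h01 j with h | h <;> simp [h]
    rw [hα, Finset.sum_boole, Nat.cast_eq_one, Finset.card_eq_one] at hsum
    obtain ⟨k, hk⟩ := hsum
    refine ⟨k, funext fun j => ?_⟩
    have hj : α j = 1 ↔ j = k := by simpa using congrArg (j ∈ ·) hk
    by_cases hjk : j = k
    · simpa [hjk] using hj.2 hjk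
    · simpa [hjk, hj] using (h01 j).resolve_right (hj.not.2 hjk)
  · rintro ⟨k, rfl⟩
    refine ⟨fun j => ?_, by simp⟩
    by_cases hjk : j = k <;> simp [hjk]

section BigM

variable {ι n r : Type*} [DecidableEq ι]

theorem eq_single_of_abs_le_bigM {z : n → ℝ} {w : ι → n → ℝ} {M : ℝ} {k : ι}
    (hzw : ∀ j i, |z i - w j i| ≤ M * (1 - (Pi.single k 1 : ι → ℝ) j))
    (hw : ∀ j i, |w j i| ≤ M * (Pi.single k 1 : ι → ℝ) j) :
    w = Pi.single k z := by
  funext j i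
  by_cases hjk : j = k
  · subst hjk
    have := hzw j i
    simp only [Pi.single_eq_same, sub_self, mul_zero, abs_nonpos_iff, sub_eq_zero] at this
    simp [this]
  · have := hw j i
    simp only [Pi.single_eq_of_ne hjk, mul_zero, abs_nonpos_iff] at this
    simp [this, hjk]

variable [Fintype ι] [Fintype n]

theorem sum_mulVec_single_sub (D : ι → Matrix r n ℝ) (d : ι → r → ℝ) (k : ι) (z : n → ℝ)
    (i : r) :
    ∑ j, ((D j *ᵥ (Pi.single k z : ι → n → ℝ) j) i - (Pi.single k 1 : ι → ℝ) j * d j i) =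
      (D k *ᵥ z) i - d k i := by
  rw [Fintype.sum_eq_single k fun j hjk => by simp [hjk]]
  simp

theorem exists_bigM_lift_iff (D : ι → Matrix r n ℝ) (d : ι → r → ℝ) (M : ℝ) (k : ι)
    (z : n → ℝ) :
    (∃ w : ι → n → ℝ, (∀ i, ∑ j, ((D j *ᵥ w j) i - (Pi.single k 1 : ι → ℝ) j * d j i) ≤ 0) ∧
        (∀ j i, |z i - w j i| ≤ M * (1 - (Pi.single k 1 : ι → ℝ) j)) ∧
        (∀ j i, |w j i| ≤ M * (Pi.single k 1 : ι → ℝ) j)) ↔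
      (∀ i, (D k *ᵥ z) i ≤ d k i) ∧ ∀ i, |z i| ≤ M := by
  constructor
  · rintro ⟨w, hle, hzw, hw⟩
    obtain rfl := eq_single_of_abs_le_bigM hzw hw
    refine ⟨fun i => ?_, fun i => ?_⟩
    · simpa only [sum_mulVec_single_sub, sub_nonpos] using hle i
    · simpa using hw k i
  · rintro ⟨hP, hbox⟩
    refine ⟨Pi.single k z, fun i => ?_, fun j i => ?_, fun j i => ?_⟩
    · simpa only [sum_mulVec_single_sub, sub_nonpos] using hP i
    all_goals by_cases hjk : j = k
    all_goals simp [hjk, hbox i]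

end BigM

theorem bigM_projection_eq_union_general
    {K p m : ℕ} (D : Fin K → Matrix (Fin p) (Fin m) ℝ)
    (d : Fin K → Fin p → ℝ) (M : ℝ) :
    {z : Fin m → ℝ | ∃ (α : Fin K → ℝ) (w : Fin K → Fin m → ℝ),
        (∀ k, α k = 0 ∨ α k = 1) ∧ (∑ k, α k) = 1 ∧
        (∀ i, (∑ k, ((D k *ᵥ w k) i - α k * d k i)) ≤ 0) ∧
        (∀ k i, |z i - w k i| ≤ M * (1 - α k)) ∧
        (∀ k i, |w k i| ≤ M * α k)} =
      (⋃ k, {z : Fin m → ℝ | ∀ i, (D k *ᵥ z) i ≤ d k i}) ∩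
        {z | ∀ i, |z i| ≤ M} := by
  ext z
  simp only [Set.mem_ofPred_eq, Set.mem_inter_iff, Set.mem_iUnion]
  constructor
  · rintro ⟨α, w, h01, hsum, hlift⟩
    obtain ⟨k, rfl⟩ := forall_eq_zero_or_eq_one_and_sum_eq_one_iff.1 ⟨h01, hsum⟩
    obtain ⟨hP, hbox⟩ := (exists_bigM_lift_iff D d M k z).1 ⟨w, hlift⟩
    exact ⟨⟨k, hP⟩, hbox⟩
  · rintro ⟨⟨k, hP⟩, hbox⟩
    obtain ⟨w, hlift⟩ := (exists_bigM_lift_iff D d M k z).2 ⟨hP, hbox⟩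
    obtain ⟨h01, hsum⟩ :=
      (forall_eq_zero_or_eq_one_and_sum_eq_one_iff (α := Pi.single k (1 : ℝ))).2 ⟨k, rfl⟩
    exact ⟨Pi.single k 1, w, h01, hsum, hlift⟩

/-- The projection onto the z-coordinates of the feasible set of the Big-M
formulation equals the union of the polytopes intersected with the box. -/
theorem bigM_projection_eq_union
    {K p m : ℕ} (D : Fin K → Matrix (Fin p) (Fin m) ℝ)
    (d : Fin K → Fin p → ℝ) (M : ℝ) (hM : 0 < M)
    (hbox : ∀ k, ∀ z : Fin m → ℝ, (∀ i, (D k *ᵥ z) i ≤ d k i) → ∀ i, |z i| ≤ M) :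
    {z : Fin m → ℝ | ∃ (α : Fin K → ℝ) (w : Fin K → Fin m → ℝ),
        (∀ k, α k = 0 ∨ α k = 1) ∧ (∑ k, α k) = 1 ∧
        (∀ i, (∑ k, ((D k *ᵥ w k) i - α k * d k i)) ≤ 0) ∧
        (∀ k i, |z i - w k i| ≤ M * (1 - α k)) ∧
        (∀ k i, |w k i| ≤ M * α k)} =
      (⋃ k, {z : Fin m → ℝ | ∀ i, (D k *ᵥ z) i ≤ d k i}) ∩
        {z | ∀ i, |z i| ≤ M} :=
  bigM_projection_eq_union_general D d M
end
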